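/- Let μ : [0,∞) → [0,1] be continuous and θ₁, θ₂ ∈ [0, 2π). Suppose Ψ¹ and Ψ² are both C¹ on [0,∞) × closure(S₁), each satisfies the equal-time evolution equations on (0,∞) × S₁ and the leaky boundary conditions on C₁ and C₂, each has compact spatial support for every bounded time interval, and Ψ¹(0, ·) = Ψ²(0, ·) on S₁. Then Ψ¹ = Ψ² everywhere on [0,∞) × closure(S₁). -/

import Mathlib

open Complex MeasureTheory

noncomputable section

/-- Partial derivative (in coordinate `i`) of a complex-valued function on `ℝⁿ`. -/
def pdC {n : ℕ} (i : Fin n) (f : (Fin n → ℝ) → ℂ) (x : Fin n → ℝ) : ℂ :=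
  fderiv ℝ f x (Pi.single i 1)

/-- The spatial domain `S₁ = {(s_ph, s_e1, s_e2) : s_e1 < s_ph < s_e2}`;
coordinates are `p 0 = s_ph`, `p 1 = s_e1`, `p 2 = s_e2`. -/
def S1 : Set (Fin 3 → ℝ) := {p | p 1 < p 0 ∧ p 0 < p 2}

/-- Spacetime point `(t, s_ph, s_e1, s_e2)` from a time `t` and spatial point `p`. -/
def pt (t : ℝ) (p : Fin 3 → ℝ) : Fin 4 → ℝ := ![t, p 0, p 1, p 2]

/-- The spatial part of a spacetime point. -/
def sp (x : Fin 4 → ℝ) : Fin 3 → ℝ := ![x 1, x 2, x 3]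

/-- The probability density `Σ_{ς₀,ς₁,ς₂} |ψ_{ς₀ς₁ς₂}|²` at time `t`, spatial point `p`. -/
def totD (ψ : ℝ → ℝ → ℝ → (Fin 4 → ℝ) → ℂ) (t : ℝ) (p : Fin 3 → ℝ) : ℝ :=
  ∑ ς₀ ∈ ({-1, 1} : Finset ℝ), ∑ ς₁ ∈ ({-1, 1} : Finset ℝ), ∑ ς₂ ∈ ({-1, 1} : Finset ℝ),
    ‖ψ ς₀ ς₁ ς₂ (pt t p)‖ ^ 2

/-!
The difference `φ = Ψ¹ - Ψ²` solves the same linear system with zero initial data, and since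
`|e^{iθ} μ| ≤ 1`, on `C₁` and `C₂` the component leaving the boundary is bounded in norm by the one
arriving at it. Along the backward characteristic of `φ_{ς₀ς₁ς₂}`, the line of velocity
`(ς₀, ς₁, ς₂)`, the equation becomes the ODE `d/dt φ_{ς₀ς₁ς₂} = -iω (φ_{ς₀(-ς₁)ς₂} + φ_{ς₀ς₁(-ς₂)})`.
Followed backwards, a characteristic either reaches `t = 0`, where `φ` vanishes, or hits `C₁` or
`C₂`, where the boundary inequality hands over to a component whose characteristic reaches `t = 0`
after at most one more reflection. Hence a bound `‖φ‖ ≤ g` on `[0, t]` improves to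
`‖φ(s)‖ ≤ ∫₀ˢ 2|ω| g`, and iterating from a uniform bound `S` (compact support) gives
`‖φ(s)‖ ≤ S (2|ω|s)ⁿ / n!` for all `n`.
-/

open Set Filter Topology

abbrev signs : Set ℝ := {-1, 1}

lemma neg_mem_signs {x : ℝ} (hx : x ∈ signs) : -x ∈ signs := by
  rcases hx with rfl | rfl <;> simp

def spacetimeDomain : Set (Fin 4 → ℝ) := {x | 0 ≤ x 0 ∧ sp x ∈ closure S1}

lemma sp_pt (t : ℝ) (p : Fin 3 → ℝ) : sp (pt t p) = p := by
  funext i; fin_cases i <;> rfl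

lemma continuous_sp : Continuous sp := by
  unfold sp; fun_prop

lemma continuous_pt : Continuous fun z : ℝ × (Fin 3 → ℝ) => pt z.1 z.2 := by
  unfold pt; fun_prop

lemma pt_mem_spacetimeDomain {t : ℝ} {p : Fin 3 → ℝ} (ht : 0 ≤ t) (hp : p ∈ closure S1) :
    pt t p ∈ spacetimeDomain :=
  ⟨ht, by rwa [sp_pt]⟩

lemma isOpen_S1 : IsOpen S1 :=
  (isOpen_lt (continuous_apply 1) (continuous_apply 0)).inter
    (isOpen_lt (continuous_apply 0) (continuous_apply 2))

lemma add_smul_vec_apply (p : Fin 3 → ℝ) (r a b c : ℝ) :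
    (p + r • ![a, b, c]) 0 = p 0 + r * a ∧ (p + r • ![a, b, c]) 1 = p 1 + r * b ∧
      (p + r • ![a, b, c]) 2 = p 2 + r * c :=
  ⟨rfl, rfl, rfl⟩

lemma closure_S1 : closure S1 = {p : Fin 3 → ℝ | p 1 ≤ p 0 ∧ p 0 ≤ p 2} := by
  refine subset_antisymm (closure_minimal (fun p hp => ⟨hp.1.le, hp.2.le⟩)
    ((isClosed_le (continuous_apply 1) (continuous_apply 0)).inter
      (isClosed_le (continuous_apply 0) (continuous_apply 2)))) fun p hp => ?_
  have hlim : Tendsto (fun ε : ℝ => p + ε • ![0, -1, 1]) (𝓝[>] 0) (𝓝 p) := by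
    have : Continuous fun ε : ℝ => p + ε • ![(0 : ℝ), -1, 1] := by fun_prop
    simpa only [zero_smul, add_zero] using (this.tendsto 0).mono_left nhdsWithin_le_nhds
  refine mem_closure_of_tendsto hlim (eventually_nhdsWithin_of_forall fun ε (hε : 0 < ε) => ?_)
  obtain ⟨e₀, e₁, e₂⟩ := add_smul_vec_apply p ε 0 (-1) 1
  refine ⟨?_, ?_⟩ <;> linarith [hp.1, hp.2]

lemma spacetimeDomain_mem_nhds {x : Fin 4 → ℝ} (h0 : 0 < x 0) (hx : sp x ∈ S1) :
    spacetimeDomain ∈ 𝓝 x :=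
  mem_of_superset (((isOpen_lt continuous_const (continuous_apply 0)).inter
    (isOpen_S1.preimage continuous_sp)).mem_nhds ⟨h0, hx⟩)
    fun _ hy => ⟨hy.1.le, subset_closure hy.2⟩

lemma add_smul_mem_closure_S1_iff {p : Fin 3 → ℝ} {r a b c : ℝ} :
    p + r • ![a, b, c] ∈ closure S1 ↔ p 1 + r * b ≤ p 0 + r * a ∧ p 0 + r * a ≤ p 2 + r * c := by
  obtain ⟨e₀, e₁, e₂⟩ := add_smul_vec_apply p r a b c
  rw [closure_S1, mem_ofPred_eq, e₀, e₁, e₂]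

lemma add_smul_mem_S1 {p v : Fin 3 → ℝ} {r R : ℝ} (hp : p ∈ S1)
    (hR : p + R • v ∈ closure S1) (hr : r ∈ Ico 0 R) : p + r • v ∈ S1 := by
  rw [closure_S1] at hR
  simp only [S1, mem_ofPred_eq, Pi.add_apply, Pi.smul_apply, smul_eq_mul] at hp hR ⊢
  obtain ⟨hr0, hrR⟩ := hr
  constructor <;> nlinarith [hp.1, hp.2, hR.1, hR.2]

lemma add_smul_mem_closure_S1 {p v : Fin 3 → ℝ} {r R : ℝ} (hp : p ∈ S1)
    (hR : p + R • v ∈ closure S1) (hr : r ∈ Icc 0 R) : p + r • v ∈ closure S1 := by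
  rcases hr.2.eq_or_lt with rfl | hlt
  · exact hR
  · exact subset_closure (add_smul_mem_S1 hp hR ⟨hr.1, hlt⟩)

lemma norm_le_on_closure_S1 {f : (Fin 4 → ℝ) → ℂ} (hf : ContinuousOn f spacetimeDomain)
    {s M : ℝ} (hs : 0 ≤ s) (h : ∀ q ∈ S1, ‖f (pt s q)‖ ≤ M) {q : Fin 3 → ℝ}
    (hq : q ∈ closure S1) : ‖f (pt s q)‖ ≤ M := by
  have hcont : ContinuousOn (fun q => f (pt s q)) (closure S1) :=
    hf.comp (continuous_pt.comp (Continuous.prodMk_right s)).continuousOn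
      fun q hq => pt_mem_spacetimeDomain hs hq
  have hmaps : MapsTo (fun q => f (pt s q)) S1 (Metric.closedBall 0 M) := fun q hq => by
    simpa using h q hq
  simpa [Metric.isClosed_closedBall.closure_eq] using hmaps.closure_of_continuousOn hcont hq

lemma pt_add_smul (p : Fin 3 → ℝ) (a b c t₂ s : ℝ) :
    pt t₂ p + (s - t₂) • ![1, -a, -b, -c] = pt s (p + (t₂ - s) • ![a, b, c]) := by
  funext i
  fin_cases i <;> simp only [pt, Pi.add_apply, Pi.smul_apply, smul_eq_mul, Matrix.cons_val_zero,
    Matrix.cons_val_one, Matrix.cons_val_two, Matrix.cons_val_three, Matrix.head_cons,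
    Matrix.tail_cons, Fin.zero_eta, Fin.mk_one, Fin.reduceFinMk] <;> ring

lemma hasDerivAt_pt_characteristic (p : Fin 3 → ℝ) (a b c t₂ s : ℝ) :
    HasDerivAt (fun u => pt u (p + (t₂ - u) • ![a, b, c])) ![1, -a, -b, -c] s := by
  have := (((hasDerivAt_id s).sub_const t₂).smul_const ![(1 : ℝ), -a, -b, -c]).const_add (pt t₂ p)
  simpa only [id, one_smul, pt_add_smul] using this

lemma pdC_sub {n : ℕ} (i : Fin n) {f g : (Fin n → ℝ) → ℂ} {x : Fin n → ℝ}
    (hf : DifferentiableAt ℝ f x) (hg : DifferentiableAt ℝ g x) :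
    pdC i (fun y => f y - g y) x = pdC i f x - pdC i g x := by
  simp only [pdC, fderiv_fun_sub hf hg, sub_apply]

lemma fderiv_apply_eq_pdC (f : (Fin 4 → ℝ) → ℂ) (x : Fin 4 → ℝ) (a b c : ℝ) :
    fderiv ℝ f x ![1, -a, -b, -c]
      = pdC 0 f x - a * pdC 1 f x - b * pdC 2 f x - c * pdC 3 f x := by
  have hv : (![1, -a, -b, -c] : Fin 4 → ℝ) = Pi.single 0 1 - a • Pi.single 1 1
      - b • Pi.single 2 1 - c • Pi.single 3 1 := by
    funext i; fin_cases i <;> simp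
  simp only [hv, map_sub, map_smul, pdC, Complex.real_smul]

theorem norm_le_norm_add_integral_of_hasDerivAt {E : Type*} [NormedAddCommGroup E]
    [NormedSpace ℝ E] [CompleteSpace E] {f f' : ℝ → E} {g : ℝ → ℝ} {a b : ℝ} (hab : a ≤ b)
    (hf : ContinuousOn f (Icc a b)) (hderiv : ∀ s ∈ Ioo a b, HasDerivAt f (f' s) s)
    (hf' : IntervalIntegrable f' volume a b) (hg : IntervalIntegrable g volume a b)
    (hbound : ∀ s ∈ Icc a b, ‖f' s‖ ≤ g s) : ‖f b‖ ≤ ‖f a‖ + ∫ s in a..b, g s := by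
  have hsub : ‖f b - f a‖ ≤ ∫ s in a..b, g s := by
    rw [← intervalIntegral.integral_eq_sub_of_hasDerivAt_of_le hab hf hderiv hf']
    exact intervalIntegral.norm_integral_le_of_norm_le hab
      (ae_of_all _ fun s hs => hbound s (Ioc_subset_Icc_self hs)) hg
  linarith [norm_le_norm_add_norm_sub' (f b) (f a)]

lemma norm_sub_le_of_eq_exp_mul {θ m : ℝ} (hm : m ∈ Icc (0 : ℝ) 1) {x x' y y' : ℂ}
    (hx : x = exp (θ * I) * (m : ℂ) * y) (hx' : x' = exp (θ * I) * (m : ℂ) * y') :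
    ‖x - x'‖ ≤ ‖y - y'‖ := by
  rw [hx, hx', ← mul_sub, norm_mul, norm_mul, norm_exp_ofReal_mul_I, one_mul, norm_real,
    Real.norm_of_nonneg hm.1]
  exact mul_le_of_le_one_left (norm_nonneg _) hm.2

def picardBound (S κ : ℝ) (n : ℕ) (s : ℝ) : ℝ := S * (κ * s) ^ n / n.factorial

lemma picardBound_zero (S κ : ℝ) : picardBound S κ 0 = fun _ => S := by
  funext s; simp [picardBound]

lemma continuous_picardBound (S κ : ℝ) (n : ℕ) : Continuous (picardBound S κ n) := by
  unfold picardBound; fun_prop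

lemma integral_picardBound (S κ : ℝ) (n : ℕ) (a b : ℝ) :
    ∫ s in a..b, κ * picardBound S κ n s
      = picardBound S κ (n + 1) b - picardBound S κ (n + 1) a := by
  have hpow : ∀ s, κ * picardBound S κ n s = κ ^ (n + 1) * S / n.factorial * s ^ n := by
    intro s; simp only [picardBound, mul_pow]; ring
  simp_rw [hpow]
  rw [intervalIntegral.integral_const_mul, integral_pow]
  simp only [picardBound, Nat.factorial_succ]
  have hn : (n : ℝ) + 1 ≠ 0 := by positivity
  have hf : (n.factorial : ℝ) ≠ 0 := by positivity
  field_simp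
  push_cast
  ring

lemma tendsto_picardBound (S κ s : ℝ) :
    Tendsto (fun n => picardBound S κ n s) atTop (𝓝 0) := by
  simpa [picardBound, mul_div_assoc] using
    (FloorSemiring.tendsto_pow_div_factorial_atTop (κ * s)).const_mul S

def SolvesEqTime (ω : ℝ) (ψ : ℝ → ℝ → ℝ → (Fin 4 → ℝ) → ℂ) : Prop :=
  ∀ ς₀ ∈ signs, ∀ ς₁ ∈ signs, ∀ ς₂ ∈ signs, ∀ x : Fin 4 → ℝ, 0 < x 0 → sp x ∈ S1 →
    pdC 0 (ψ ς₀ ς₁ ς₂) x - (ς₀ : ℂ) * pdC 1 (ψ ς₀ ς₁ ς₂) x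
      - (ς₁ : ℂ) * pdC 2 (ψ ς₀ ς₁ ς₂) x - (ς₂ : ℂ) * pdC 3 (ψ ς₀ ς₁ ς₂) x
      + I * (ω : ℂ) * ψ ς₀ (-ς₁) ς₂ x + I * (ω : ℂ) * ψ ς₀ ς₁ (-ς₂) x = 0

lemma SolvesEqTime.sub {ω : ℝ} {ψ χ : ℝ → ℝ → ℝ → (Fin 4 → ℝ) → ℂ}
    (hψ : SolvesEqTime ω ψ) (hχ : SolvesEqTime ω χ)
    (hψd : ∀ ς₀ ∈ signs, ∀ ς₁ ∈ signs, ∀ ς₂ ∈ signs,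
      DifferentiableOn ℝ (ψ ς₀ ς₁ ς₂) spacetimeDomain)
    (hχd : ∀ ς₀ ∈ signs, ∀ ς₁ ∈ signs, ∀ ς₂ ∈ signs,
      DifferentiableOn ℝ (χ ς₀ ς₁ ς₂) spacetimeDomain) :
    SolvesEqTime ω fun ς₀ ς₁ ς₂ x => ψ ς₀ ς₁ ς₂ x - χ ς₀ ς₁ ς₂ x := by
  intro ς₀ hς₀ ς₁ hς₁ ς₂ hς₂ x h0 hx
  have hU := spacetimeDomain_mem_nhds h0 hx
  have hψx := (hψd ς₀ hς₀ ς₁ hς₁ ς₂ hς₂).differentiableAt hU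
  have hχx := (hχd ς₀ hς₀ ς₁ hς₁ ς₂ hς₂).differentiableAt hU
  simp only [pdC_sub _ hψx hχx]
  linear_combination hψ ς₀ hς₀ ς₁ hς₁ ς₂ hς₂ x h0 hx - hχ ς₀ hς₀ ς₁ hς₁ ς₂ hς₂ x h0 hx

/-- `φ (-1) 1 ς₂` on `C₁` and `φ 1 ς₁ (-1)` on `C₂` are the components whose backward
characteristics leave `S₁` there. -/
structure IsDissipativeSolution (ω : ℝ) (φ : ℝ → ℝ → ℝ → (Fin 4 → ℝ) → ℂ) : Prop where
  contDiffOn : ∀ ς₀ ∈ signs, ∀ ς₁ ∈ signs, ∀ ς₂ ∈ signs,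
    ContDiffOn ℝ 1 (φ ς₀ ς₁ ς₂) spacetimeDomain
  solves : SolvesEqTime ω φ
  norm_le_on_C₁ : ∀ ς₂ ∈ signs, ∀ s, 0 ≤ s → ∀ q : Fin 3 → ℝ, q 1 = q 0 → q 0 < q 2 →
    ‖φ (-1) 1 ς₂ (pt s q)‖ ≤ ‖φ 1 (-1) ς₂ (pt s q)‖
  norm_le_on_C₂ : ∀ ς₁ ∈ signs, ∀ s, 0 ≤ s → ∀ q : Fin 3 → ℝ, q 1 < q 0 → q 0 = q 2 →
    ‖φ 1 ς₁ (-1) (pt s q)‖ ≤ ‖φ (-1) ς₁ 1 (pt s q)‖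

def ComponentBoundedBy (φ : ℝ → ℝ → ℝ → (Fin 4 → ℝ) → ℂ) (g : ℝ → ℝ) (t ς₀ ς₁ ς₂ : ℝ) :
    Prop :=
  ∀ s ∈ Icc 0 t, ∀ q ∈ closure S1, ‖φ ς₀ ς₁ ς₂ (pt s q)‖ ≤ g s

def BoundedBy (φ : ℝ → ℝ → ℝ → (Fin 4 → ℝ) → ℂ) (g : ℝ → ℝ) (t : ℝ) : Prop :=
  ∀ ς₀ ∈ signs, ∀ ς₁ ∈ signs, ∀ ς₂ ∈ signs, ComponentBoundedBy φ g t ς₀ ς₁ ς₂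

lemma exists_boundedBy_const {φ : ℝ → ℝ → ℝ → (Fin 4 → ℝ) → ℂ}
    (hφ : ∀ ς₀ ∈ signs, ∀ ς₁ ∈ signs, ∀ ς₂ ∈ signs, ContinuousOn (φ ς₀ ς₁ ς₂) spacetimeDomain)
    (hsupp : ∀ T : ℝ, ∃ K : Set (Fin 3 → ℝ), IsCompact K ∧
      ∀ ς₀ ∈ signs, ∀ ς₁ ∈ signs, ∀ ς₂ ∈ signs,
        ∀ s ∈ Icc 0 T, ∀ p : Fin 3 → ℝ, p ∉ K → φ ς₀ ς₁ ς₂ (pt s p) = 0)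
    (t : ℝ) : ∃ S, BoundedBy φ (fun _ => S) t := by
  obtain ⟨K, hK, hφK⟩ := hsupp t
  set C := Icc 0 t ×ˢ (closure S1 ∩ K)
  have hC : IsCompact C := isCompact_Icc.prod (hK.inter_left isClosed_closure)
  have hbdd : BddAbove (⋃ i ∈ signs ×ˢ signs ×ˢ signs,
      (fun z : ℝ × (Fin 3 → ℝ) => ‖φ i.1 i.2.1 i.2.2 (pt z.1 z.2)‖) '' C) := by
    refine ((toFinite _).prod ((toFinite _).prod (toFinite _))).bddAbove_biUnion.2
      fun i hi => (hC.image_of_continuousOn ?_).bddAbove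
    exact ((hφ _ hi.1 _ hi.2.1 _ hi.2.2).comp continuous_pt.continuousOn
      fun z hz => pt_mem_spacetimeDomain hz.1.1 hz.2.1).norm
  obtain ⟨S, hS⟩ := hbdd
  refine ⟨max S 0, fun ς₀ hς₀ ς₁ hς₁ ς₂ hς₂ s hs q hq => ?_⟩
  by_cases hqK : q ∈ K
  · exact (hS (mem_biUnion (x := (ς₀, ς₁, ς₂)) ⟨hς₀, hς₁, hς₂⟩
      ⟨(s, q), ⟨hs, hq, hqK⟩, rfl⟩)).trans (le_max_left _ _)
  · simp [hφK ς₀ hς₀ ς₁ hς₁ ς₂ hς₂ s hs q hqK]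

namespace IsDissipativeSolution

variable {ω : ℝ} {φ : ℝ → ℝ → ℝ → (Fin 4 → ℝ) → ℂ} {ς₀ ς₁ ς₂ : ℝ}

lemma hasDerivAt_characteristic (hφ : IsDissipativeSolution ω φ) (hς₀ : ς₀ ∈ signs)
    (hς₁ : ς₁ ∈ signs) (hς₂ : ς₂ ∈ signs) {p : Fin 3 → ℝ} {t₂ s : ℝ} (hs : 0 < s)
    (hp : p + (t₂ - s) • ![ς₀, ς₁, ς₂] ∈ S1) :
    HasDerivAt (fun u => φ ς₀ ς₁ ς₂ (pt u (p + (t₂ - u) • ![ς₀, ς₁, ς₂])))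
      (-(I * ω * (φ ς₀ (-ς₁) ς₂ (pt s (p + (t₂ - s) • ![ς₀, ς₁, ς₂]))
        + φ ς₀ ς₁ (-ς₂) (pt s (p + (t₂ - s) • ![ς₀, ς₁, ς₂]))))) s := by
  set x := pt s (p + (t₂ - s) • ![ς₀, ς₁, ς₂])
  have hxS : sp x ∈ S1 := by rwa [sp_pt]
  have hd := ((hφ.contDiffOn ς₀ hς₀ ς₁ hς₁ ς₂ hς₂).differentiableOn one_ne_zero).differentiableAt
    (spacetimeDomain_mem_nhds hs hxS)
  refine (hd.hasFDerivAt.comp_hasDerivAt s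
    (hasDerivAt_pt_characteristic p ς₀ ς₁ ς₂ t₂ s)).congr_deriv ?_
  rw [fderiv_apply_eq_pdC]
  linear_combination hφ.solves ς₀ hς₀ ς₁ hς₁ ς₂ hς₂ x hs hxS

lemma norm_le_along_characteristic (hφ : IsDissipativeSolution ω φ) (hς₀ : ς₀ ∈ signs)
    (hς₁ : ς₁ ∈ signs) (hς₂ : ς₂ ∈ signs) {t₁ t₂ t : ℝ} (ht₁ : 0 ≤ t₁) (h12 : t₁ ≤ t₂)
    (h2t : t₂ ≤ t) {p : Fin 3 → ℝ} (hp : p ∈ S1) (hq : p + (t₂ - t₁) • ![ς₀, ς₁, ς₂] ∈ closure S1)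
    {g : ℝ → ℝ} (hg : ContinuousOn g (Icc t₁ t₂)) (hbd : BoundedBy φ g t) :
    ‖φ ς₀ ς₁ ς₂ (pt t₂ p)‖
      ≤ ‖φ ς₀ ς₁ ς₂ (pt t₁ (p + (t₂ - t₁) • ![ς₀, ς₁, ς₂]))‖ + ∫ s in t₁..t₂, 2 * |ω| * g s := by
  set γ : ℝ → Fin 4 → ℝ := fun s => pt s (p + (t₂ - s) • ![ς₀, ς₁, ς₂])
  have hmem : ∀ s ∈ Icc t₁ t₂, p + (t₂ - s) • ![ς₀, ς₁, ς₂] ∈ closure S1 := fun s hs =>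
    add_smul_mem_closure_S1 hp hq ⟨by linarith [hs.2], by linarith [hs.1]⟩
  have hγ : Continuous γ :=
    continuous_iff_continuousAt.2 fun s =>
      (hasDerivAt_pt_characteristic p ς₀ ς₁ ς₂ t₂ s).continuousAt
  have hcont : ∀ ς₀' ∈ signs, ∀ ς₁' ∈ signs, ∀ ς₂' ∈ signs,
      ContinuousOn (fun s => φ ς₀' ς₁' ς₂' (γ s)) (Icc t₁ t₂) := fun ς₀' h₀ ς₁' h₁ ς₂' h₂ =>
    (hφ.contDiffOn ς₀' h₀ ς₁' h₁ ς₂' h₂).continuousOn.comp hγ.continuousOn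
      fun s hs => pt_mem_spacetimeDomain (by linarith [hs.1]) (hmem s hs)
  have hf' : ContinuousOn (fun s => -(I * ω * (φ ς₀ (-ς₁) ς₂ (γ s) + φ ς₀ ς₁ (-ς₂) (γ s))))
      (Icc t₁ t₂) :=
    (continuousOn_const.mul ((hcont ς₀ hς₀ (-ς₁) (neg_mem_signs hς₁) ς₂ hς₂).add
      (hcont ς₀ hς₀ ς₁ hς₁ (-ς₂) (neg_mem_signs hς₂)))).neg
  have hbound : ∀ s ∈ Icc t₁ t₂,
      ‖-(I * ω * (φ ς₀ (-ς₁) ς₂ (γ s) + φ ς₀ ς₁ (-ς₂) (γ s)))‖ ≤ 2 * |ω| * g s := by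
    intro s hs
    have hs' : s ∈ Icc 0 t := ⟨by linarith [hs.1], hs.2.trans h2t⟩
    calc ‖-(I * ω * (φ ς₀ (-ς₁) ς₂ (γ s) + φ ς₀ ς₁ (-ς₂) (γ s)))‖
        = |ω| * ‖φ ς₀ (-ς₁) ς₂ (γ s) + φ ς₀ ς₁ (-ς₂) (γ s)‖ := by
          rw [norm_neg, norm_mul, norm_mul, norm_I, one_mul, norm_real, Real.norm_eq_abs]
      _ ≤ |ω| * (g s + g s) := by
          gcongr
          exact (norm_add_le _ _).trans (add_le_add
            (hbd ς₀ hς₀ (-ς₁) (neg_mem_signs hς₁) ς₂ hς₂ s hs' _ (hmem s hs))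
            (hbd ς₀ hς₀ ς₁ hς₁ (-ς₂) (neg_mem_signs hς₂) s hs' _ (hmem s hs)))
      _ = 2 * |ω| * g s := by ring
  have key := norm_le_norm_add_integral_of_hasDerivAt (g := fun s => 2 * |ω| * g s) h12
    (hcont ς₀ hς₀ ς₁ hς₁ ς₂ hς₂)
    (fun s hs => hφ.hasDerivAt_characteristic hς₀ hς₁ hς₂ (by linarith [hs.1])
      (add_smul_mem_S1 hp hq ⟨by linarith [hs.2], by linarith [hs.1]⟩))
    (hf'.intervalIntegrable_of_Icc h12) ((continuousOn_const.mul hg).intervalIntegrable_of_Icc h12)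
    hbound
  simpa only [γ, sub_self, zero_smul, add_zero] using key

variable {S : ℝ} {n : ℕ} {t : ℝ}

lemma componentBoundedBy_of_entry (hφ : IsDissipativeSolution ω φ)
    (hn : BoundedBy φ (picardBound S (2 * |ω|) n) t) (hς₀ : ς₀ ∈ signs) (hς₁ : ς₁ ∈ signs)
    (hς₂ : ς₂ ∈ signs)
    (hentry : ∀ t₂ ∈ Icc 0 t, ∀ p ∈ S1, ∃ t₁ ∈ Icc 0 t₂,
      p + (t₂ - t₁) • ![ς₀, ς₁, ς₂] ∈ closure S1 ∧
      ‖φ ς₀ ς₁ ς₂ (pt t₁ (p + (t₂ - t₁) • ![ς₀, ς₁, ς₂]))‖ ≤ picardBound S (2 * |ω|) (n + 1) t₁) :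
    ComponentBoundedBy φ (picardBound S (2 * |ω|) (n + 1)) t ς₀ ς₁ ς₂ := by
  intro t₂ ht₂ q hq
  refine norm_le_on_closure_S1 (hφ.contDiffOn ς₀ hς₀ ς₁ hς₁ ς₂ hς₂).continuousOn ht₂.1
    (fun p hp => ?_) hq
  obtain ⟨t₁, ht₁, hq₁, hstart⟩ := hentry t₂ ht₂ p hp
  have := hφ.norm_le_along_characteristic hς₀ hς₁ hς₂ ht₁.1 ht₁.2 ht₂.2 hp hq₁
    (continuous_picardBound S _ n).continuousOn hn
  rw [integral_picardBound] at this
  linarith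

lemma componentBoundedBy_of_le (hφ : IsDissipativeSolution ω φ)
    (hinit : ∀ ς₀ ∈ signs, ∀ ς₁ ∈ signs, ∀ ς₂ ∈ signs, ∀ q ∈ closure S1, φ ς₀ ς₁ ς₂ (pt 0 q) = 0)
    (hn : BoundedBy φ (picardBound S (2 * |ω|) n) t) (hς₀ : ς₀ ∈ signs) (hς₁ : ς₁ ∈ signs)
    (hς₂ : ς₂ ∈ signs) (h₁₀ : ς₁ ≤ ς₀) (h₀₂ : ς₀ ≤ ς₂) :
    ComponentBoundedBy φ (picardBound S (2 * |ω|) (n + 1)) t ς₀ ς₁ ς₂ := by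
  refine hφ.componentBoundedBy_of_entry hn hς₀ hς₁ hς₂
    fun t₂ ht₂ p hp => ⟨0, ⟨le_rfl, ht₂.1⟩, ?_⟩
  have hq : p + (t₂ - 0) • ![ς₀, ς₁, ς₂] ∈ closure S1 := by
    obtain ⟨hp₁, hp₂⟩ := hp
    rw [add_smul_mem_closure_S1_iff]
    constructor <;> nlinarith [ht₂.1]
  exact ⟨hq, by rw [hinit ς₀ hς₀ ς₁ hς₁ ς₂ hς₂ _ hq, norm_zero]; simp [picardBound]⟩

lemma componentBoundedBy_reflect_C₁ (hφ : IsDissipativeSolution ω φ)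
    (hinit : ∀ ς₀ ∈ signs, ∀ ς₁ ∈ signs, ∀ ς₂ ∈ signs, ∀ q ∈ closure S1, φ ς₀ ς₁ ς₂ (pt 0 q) = 0)
    (hn : BoundedBy φ (picardBound S (2 * |ω|) n) t) (hς₂ : ς₂ ∈ signs)
    (hin : ComponentBoundedBy φ (picardBound S (2 * |ω|) (n + 1)) t 1 (-1) ς₂) :
    ComponentBoundedBy φ (picardBound S (2 * |ω|) (n + 1)) t (-1) 1 ς₂ := by
  refine hφ.componentBoundedBy_of_entry hn (by simp) (by simp) hς₂ fun t₂ ht₂ p hp => ?_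
  have hς₂_ge : -1 ≤ ς₂ := by rcases hς₂ with rfl | rfl <;> norm_num
  obtain ⟨hp₁, hp₂⟩ := hp
  -- the backward characteristic reaches `C₁` after time `(p 0 - p 1) / 2`
  rcases le_or_gt t₂ ((p 0 - p 1) / 2) with hle | hlt
  · refine ⟨0, ⟨le_rfl, ht₂.1⟩, ?_⟩
    have hq : p + (t₂ - 0) • ![-1, 1, ς₂] ∈ closure S1 := by
      rw [add_smul_mem_closure_S1_iff]
      constructor <;> nlinarith [ht₂.1]
    exact ⟨hq, by rw [hinit (-1) (by simp) 1 (by simp) ς₂ hς₂ _ hq, norm_zero]; simp [picardBound]⟩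
  · refine ⟨t₂ - (p 0 - p 1) / 2, ⟨by linarith, by linarith⟩, ?_⟩
    rw [sub_sub_cancel]
    obtain ⟨e₀, e₁, e₂⟩ := add_smul_vec_apply p ((p 0 - p 1) / 2) (-1) 1 ς₂
    set q := p + ((p 0 - p 1) / 2) • ![-1, 1, ς₂]
    have hq₁ : q 1 = q 0 := by rw [e₀, e₁]; ring
    have hq₂ : q 0 < q 2 := by rw [e₀, e₂]; nlinarith
    have hq : q ∈ closure S1 := by rw [closure_S1]; exact ⟨hq₁.le, hq₂.le⟩
    exact ⟨hq, (hφ.norm_le_on_C₁ ς₂ hς₂ _ (by linarith) q hq₁ hq₂).trans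
      (hin _ ⟨by linarith, by linarith [ht₂.2]⟩ q hq)⟩

lemma componentBoundedBy_reflect_C₂ (hφ : IsDissipativeSolution ω φ)
    (hinit : ∀ ς₀ ∈ signs, ∀ ς₁ ∈ signs, ∀ ς₂ ∈ signs, ∀ q ∈ closure S1, φ ς₀ ς₁ ς₂ (pt 0 q) = 0)
    (hn : BoundedBy φ (picardBound S (2 * |ω|) n) t) (hς₁ : ς₁ ∈ signs)
    (hin : ComponentBoundedBy φ (picardBound S (2 * |ω|) (n + 1)) t (-1) ς₁ 1) :
    ComponentBoundedBy φ (picardBound S (2 * |ω|) (n + 1)) t 1 ς₁ (-1) := by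
  refine hφ.componentBoundedBy_of_entry hn (by simp) hς₁ (by simp) fun t₂ ht₂ p hp => ?_
  have hς₁_le : ς₁ ≤ 1 := by rcases hς₁ with rfl | rfl <;> norm_num
  obtain ⟨hp₁, hp₂⟩ := hp
  rcases le_or_gt t₂ ((p 2 - p 0) / 2) with hle | hlt
  · refine ⟨0, ⟨le_rfl, ht₂.1⟩, ?_⟩
    have hq : p + (t₂ - 0) • ![1, ς₁, -1] ∈ closure S1 := by
      rw [add_smul_mem_closure_S1_iff]
      constructor <;> nlinarith [ht₂.1]
    exact ⟨hq, by rw [hinit 1 (by simp) ς₁ hς₁ (-1) (by simp) _ hq, norm_zero]; simp [picardBound]⟩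
  · refine ⟨t₂ - (p 2 - p 0) / 2, ⟨by linarith, by linarith⟩, ?_⟩
    rw [sub_sub_cancel]
    obtain ⟨e₀, e₁, e₂⟩ := add_smul_vec_apply p ((p 2 - p 0) / 2) 1 ς₁ (-1)
    set q := p + ((p 2 - p 0) / 2) • ![1, ς₁, -1]
    have hq₁ : q 1 < q 0 := by rw [e₀, e₁]; nlinarith
    have hq₂ : q 0 = q 2 := by rw [e₀, e₂]; ring
    have hq : q ∈ closure S1 := by rw [closure_S1]; exact ⟨hq₁.le, hq₂.le⟩
    exact ⟨hq, (hφ.norm_le_on_C₂ ς₁ hς₁ _ (by linarith) q hq₁ hq₂).trans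
      (hin _ ⟨by linarith, by linarith [ht₂.2]⟩ q hq)⟩

lemma boundedBy_succ (hφ : IsDissipativeSolution ω φ)
    (hinit : ∀ ς₀ ∈ signs, ∀ ς₁ ∈ signs, ∀ ς₂ ∈ signs, ∀ q ∈ closure S1, φ ς₀ ς₁ ς₂ (pt 0 q) = 0)
    (hn : BoundedBy φ (picardBound S (2 * |ω|) n) t) :
    BoundedBy φ (picardBound S (2 * |ω|) (n + 1)) t := by
  have hM : (-1 : ℝ) ∈ signs := by simp
  have hP : (1 : ℝ) ∈ signs := by simp
  have hPMP := hφ.componentBoundedBy_of_le hinit hn hP hM hP (by norm_num) (by norm_num)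
  have hMMP := hφ.componentBoundedBy_of_le hinit hn hM hM hP (by norm_num) (by norm_num)
  have hMPP := hφ.componentBoundedBy_reflect_C₁ hinit hn hP hPMP
  have hPMM := hφ.componentBoundedBy_reflect_C₂ hinit hn hM hMMP
  intro ς₀ hς₀ ς₁ hς₁ ς₂ hς₂
  rcases hς₀ with rfl | rfl <;> rcases hς₁ with rfl | rfl <;> rcases hς₂ with rfl | rfl
  · exact hφ.componentBoundedBy_of_le hinit hn hM hM hM le_rfl le_rfl
  · exact hMMP
  · exact hφ.componentBoundedBy_reflect_C₁ hinit hn hM hPMM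
  · exact hMPP
  · exact hPMM
  · exact hPMP
  · exact hφ.componentBoundedBy_reflect_C₂ hinit hn hP hMPP
  · exact hφ.componentBoundedBy_of_le hinit hn hP hP hP le_rfl le_rfl

theorem eq_zero (hφ : IsDissipativeSolution ω φ)
    (hinit : ∀ ς₀ ∈ signs, ∀ ς₁ ∈ signs, ∀ ς₂ ∈ signs, ∀ q ∈ S1, φ ς₀ ς₁ ς₂ (pt 0 q) = 0)
    (hsupp : ∀ T : ℝ, ∃ K : Set (Fin 3 → ℝ), IsCompact K ∧
      ∀ ς₀ ∈ signs, ∀ ς₁ ∈ signs, ∀ ς₂ ∈ signs,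
        ∀ s ∈ Icc 0 T, ∀ p : Fin 3 → ℝ, p ∉ K → φ ς₀ ς₁ ς₂ (pt s p) = 0) :
    ∀ ς₀ ∈ signs, ∀ ς₁ ∈ signs, ∀ ς₂ ∈ signs, ∀ t : ℝ, 0 ≤ t → ∀ p ∈ closure S1,
      φ ς₀ ς₁ ς₂ (pt t p) = 0 := by
  have hcont : ∀ ς₀ ∈ signs, ∀ ς₁ ∈ signs, ∀ ς₂ ∈ signs,
      ContinuousOn (φ ς₀ ς₁ ς₂) spacetimeDomain := fun ς₀ hς₀ ς₁ hς₁ ς₂ hς₂ =>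
    (hφ.contDiffOn ς₀ hς₀ ς₁ hς₁ ς₂ hς₂).continuousOn
  have hinit_cl : ∀ ς₀ ∈ signs, ∀ ς₁ ∈ signs, ∀ ς₂ ∈ signs, ∀ q ∈ closure S1,
      φ ς₀ ς₁ ς₂ (pt 0 q) = 0 := fun ς₀ hς₀ ς₁ hς₁ ς₂ hς₂ q hq =>
    norm_le_zero_iff.mp <| norm_le_on_closure_S1 (hcont ς₀ hς₀ ς₁ hς₁ ς₂ hς₂) le_rfl
      (fun q hq => (hinit ς₀ hς₀ ς₁ hς₁ ς₂ hς₂ q hq ▸ norm_zero).le) hq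
  intro ς₀ hς₀ ς₁ hς₁ ς₂ hς₂ t ht p hp
  obtain ⟨S, hS⟩ := exists_boundedBy_const hcont hsupp t
  have hbound : ∀ n, BoundedBy φ (picardBound S (2 * |ω|) n) t := by
    intro n
    induction n with
    | zero => rwa [picardBound_zero]
    | succ n ih => exact hφ.boundedBy_succ hinit_cl ih
  exact norm_le_zero_iff.mp <| ge_of_tendsto' (tendsto_picardBound S _ t)
    fun n => hbound n ς₀ hς₀ ς₁ hς₁ ς₂ hς₂ t ⟨ht, le_rfl⟩ p hp

end IsDissipativeSolution

theorem leaky_uniqueness_general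
    (ω : ℝ)
    (θ₁ θ₂ : ℝ)
    (μ : ℝ → ℝ) (hμ01 : ∀ r, 0 ≤ r → μ r ∈ Set.Icc (0 : ℝ) 1)
    (ψA : ℝ → ℝ → ℝ → (Fin 4 → ℝ) → ℂ)
    -- `Ψ` is C¹ on `[0,∞) × closure S₁`
    (hregA : ∀ ς₀ ∈ ({-1, 1} : Set ℝ), ∀ ς₁ ∈ ({-1, 1} : Set ℝ), ∀ ς₂ ∈ ({-1, 1} : Set ℝ),
      ContDiffOn ℝ 1 (ψA ς₀ ς₁ ς₂) {x : Fin 4 → ℝ | 0 ≤ x 0 ∧ sp x ∈ closure S1})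
    -- equal-time evolution equations on `(0,∞) × S₁`
    (heqA : ∀ ς₀ ∈ ({-1, 1} : Set ℝ), ∀ ς₁ ∈ ({-1, 1} : Set ℝ), ∀ ς₂ ∈ ({-1, 1} : Set ℝ),
      ∀ x : Fin 4 → ℝ, 0 < x 0 → sp x ∈ S1 →
        pdC 0 (ψA ς₀ ς₁ ς₂) x - (ς₀ : ℂ) * pdC 1 (ψA ς₀ ς₁ ς₂) x
          - (ς₁ : ℂ) * pdC 2 (ψA ς₀ ς₁ ς₂) x - (ς₂ : ℂ) * pdC 3 (ψA ς₀ ς₁ ς₂) x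
          + Complex.I * (ω : ℂ) * ψA ς₀ (-ς₁) ς₂ x
          + Complex.I * (ω : ℂ) * ψA ς₀ ς₁ (-ς₂) x = 0)
    -- leaky boundary condition on `C₁ = {s_e1 = s_ph < s_e2}`
    (hbc1A : ∀ ς₂ ∈ ({-1, 1} : Set ℝ), ∀ t : ℝ, 0 ≤ t → ∀ r b : ℝ, r < b →
      ψA (-1) 1 ς₂ ![t, r, r, b]
        = Complex.exp (θ₁ * Complex.I) * ((μ |r - b| : ℝ) : ℂ) * ψA 1 (-1) ς₂ ![t, r, r, b])
    -- leaky boundary condition on `C₂ = {s_e1 < s_ph = s_e2}`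
    (hbc2A : ∀ ς₁ ∈ ({-1, 1} : Set ℝ), ∀ t : ℝ, 0 ≤ t → ∀ a r : ℝ, a < r →
      ψA 1 ς₁ (-1) ![t, r, a, r]
        = Complex.exp (θ₂ * Complex.I) * ((μ |a - r| : ℝ) : ℂ) * ψA (-1) ς₁ 1 ![t, r, a, r])
    -- compact spatial support on every bounded time interval
    (hsuppA : ∀ T : ℝ, ∃ K : Set (Fin 3 → ℝ), IsCompact K ∧
      ∀ ς₀ ∈ ({-1, 1} : Set ℝ), ∀ ς₁ ∈ ({-1, 1} : Set ℝ), ∀ ς₂ ∈ ({-1, 1} : Set ℝ),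
        ∀ t ∈ Set.Icc 0 T, ∀ p : Fin 3 → ℝ, p ∉ K → ψA ς₀ ς₁ ς₂ (pt t p) = 0)
    (ψB : ℝ → ℝ → ℝ → (Fin 4 → ℝ) → ℂ)
    -- `Ψ` is C¹ on `[0,∞) × closure S₁`
    (hregB : ∀ ς₀ ∈ ({-1, 1} : Set ℝ), ∀ ς₁ ∈ ({-1, 1} : Set ℝ), ∀ ς₂ ∈ ({-1, 1} : Set ℝ),
      ContDiffOn ℝ 1 (ψB ς₀ ς₁ ς₂) {x : Fin 4 → ℝ | 0 ≤ x 0 ∧ sp x ∈ closure S1})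
    -- equal-time evolution equations on `(0,∞) × S₁`
    (heqB : ∀ ς₀ ∈ ({-1, 1} : Set ℝ), ∀ ς₁ ∈ ({-1, 1} : Set ℝ), ∀ ς₂ ∈ ({-1, 1} : Set ℝ),
      ∀ x : Fin 4 → ℝ, 0 < x 0 → sp x ∈ S1 →
        pdC 0 (ψB ς₀ ς₁ ς₂) x - (ς₀ : ℂ) * pdC 1 (ψB ς₀ ς₁ ς₂) x
          - (ς₁ : ℂ) * pdC 2 (ψB ς₀ ς₁ ς₂) x - (ς₂ : ℂ) * pdC 3 (ψB ς₀ ς₁ ς₂) x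
          + Complex.I * (ω : ℂ) * ψB ς₀ (-ς₁) ς₂ x
          + Complex.I * (ω : ℂ) * ψB ς₀ ς₁ (-ς₂) x = 0)
    -- leaky boundary condition on `C₁ = {s_e1 = s_ph < s_e2}`
    (hbc1B : ∀ ς₂ ∈ ({-1, 1} : Set ℝ), ∀ t : ℝ, 0 ≤ t → ∀ r b : ℝ, r < b →
      ψB (-1) 1 ς₂ ![t, r, r, b]
        = Complex.exp (θ₁ * Complex.I) * ((μ |r - b| : ℝ) : ℂ) * ψB 1 (-1) ς₂ ![t, r, r, b])
    -- leaky boundary condition on `C₂ = {s_e1 < s_ph = s_e2}`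
    (hbc2B : ∀ ς₁ ∈ ({-1, 1} : Set ℝ), ∀ t : ℝ, 0 ≤ t → ∀ a r : ℝ, a < r →
      ψB 1 ς₁ (-1) ![t, r, a, r]
        = Complex.exp (θ₂ * Complex.I) * ((μ |a - r| : ℝ) : ℂ) * ψB (-1) ς₁ 1 ![t, r, a, r])
    -- compact spatial support on every bounded time interval
    (hsuppB : ∀ T : ℝ, ∃ K : Set (Fin 3 → ℝ), IsCompact K ∧
      ∀ ς₀ ∈ ({-1, 1} : Set ℝ), ∀ ς₁ ∈ ({-1, 1} : Set ℝ), ∀ ς₂ ∈ ({-1, 1} : Set ℝ),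
        ∀ t ∈ Set.Icc 0 T, ∀ p : Fin 3 → ℝ, p ∉ K → ψB ς₀ ς₁ ς₂ (pt t p) = 0)
    -- same initial data on `S₁`
    (hinit : ∀ ς₀ ∈ ({-1, 1} : Set ℝ), ∀ ς₁ ∈ ({-1, 1} : Set ℝ), ∀ ς₂ ∈ ({-1, 1} : Set ℝ),
      ∀ p ∈ S1, ψA ς₀ ς₁ ς₂ (pt 0 p) = ψB ς₀ ς₁ ς₂ (pt 0 p)) :
    ∀ ς₀ ∈ ({-1, 1} : Set ℝ), ∀ ς₁ ∈ ({-1, 1} : Set ℝ), ∀ ς₂ ∈ ({-1, 1} : Set ℝ),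
      ∀ t : ℝ, 0 ≤ t → ∀ p ∈ closure S1,
        ψA ς₀ ς₁ ς₂ (pt t p) = ψB ς₀ ς₁ ς₂ (pt t p) := by
  set φ : ℝ → ℝ → ℝ → (Fin 4 → ℝ) → ℂ := fun ς₀ ς₁ ς₂ x => ψA ς₀ ς₁ ς₂ x - ψB ς₀ ς₁ ς₂ x
  have hφ : IsDissipativeSolution ω φ :=
    { contDiffOn := fun ς₀ h₀ ς₁ h₁ ς₂ h₂ => (hregA ς₀ h₀ ς₁ h₁ ς₂ h₂).sub (hregB ς₀ h₀ ς₁ h₁ ς₂ h₂)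
      solves := SolvesEqTime.sub heqA heqB
        (fun ς₀ h₀ ς₁ h₁ ς₂ h₂ => (hregA ς₀ h₀ ς₁ h₁ ς₂ h₂).differentiableOn one_ne_zero)
        (fun ς₀ h₀ ς₁ h₁ ς₂ h₂ => (hregB ς₀ h₀ ς₁ h₁ ς₂ h₂).differentiableOn one_ne_zero)
      norm_le_on_C₁ := fun ς₂ h₂ s hs q h₁₀ h₀₂ => by
        simp only [φ, pt, h₁₀]
        exact norm_sub_le_of_eq_exp_mul (hμ01 _ (abs_nonneg _))
          (hbc1A ς₂ h₂ s hs _ _ h₀₂) (hbc1B ς₂ h₂ s hs _ _ h₀₂)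
      norm_le_on_C₂ := fun ς₁ h₁ s hs q h₁₀ h₀₂ => by
        simp only [φ, pt, ← h₀₂]
        exact norm_sub_le_of_eq_exp_mul (hμ01 _ (abs_nonneg _))
          (hbc2A ς₁ h₁ s hs _ _ h₁₀) (hbc2B ς₁ h₁ s hs _ _ h₁₀) }
  intro ς₀ h₀ ς₁ h₁ ς₂ h₂ t ht p hp
  refine sub_eq_zero.mp (hφ.eq_zero (fun ς₀ h₀ ς₁ h₁ ς₂ h₂ q hq => sub_eq_zero.mpr
    (hinit ς₀ h₀ ς₁ h₁ ς₂ h₂ q hq)) (fun T => ?_) ς₀ h₀ ς₁ h₁ ς₂ h₂ t ht p hp)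
  obtain ⟨KA, hKA, hA⟩ := hsuppA T
  obtain ⟨KB, hKB, hB⟩ := hsuppB T
  refine ⟨KA ∪ KB, hKA.union hKB, fun ς₀ h₀ ς₁ h₁ ς₂ h₂ s hs q hq => ?_⟩
  simp only [φ, hA ς₀ h₀ ς₁ h₁ ς₂ h₂ s hs q (fun h => hq (.inl h)),
    hB ς₀ h₀ ς₁ h₁ ς₂ h₂ s hs q (fun h => hq (.inr h)), sub_zero]

/-- Uniqueness for the leaky-boundary equal-time IBVP: two `C¹`
solutions with the same initial data on `S₁` agree everywhere on `[0,∞) × closure S₁`. -/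
theorem leaky_uniqueness
    (hbar m_e ω : ℝ) (hhbar : 0 < hbar) (hm : 0 ≤ m_e) (hω : ω = m_e / hbar)
    (θ₁ θ₂ : ℝ) (hθ₁ : θ₁ ∈ Set.Ico 0 (2 * Real.pi)) (hθ₂ : θ₂ ∈ Set.Ico 0 (2 * Real.pi))
    (μ : ℝ → ℝ) (hμc : Continuous μ) (hμ01 : ∀ r, 0 ≤ r → μ r ∈ Set.Icc (0 : ℝ) 1)
    (ψA : ℝ → ℝ → ℝ → (Fin 4 → ℝ) → ℂ)
    -- `Ψ` is C¹ on `[0,∞) × closure S₁`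
    (hregA : ∀ ς₀ ∈ ({-1, 1} : Set ℝ), ∀ ς₁ ∈ ({-1, 1} : Set ℝ), ∀ ς₂ ∈ ({-1, 1} : Set ℝ),
      ContDiffOn ℝ 1 (ψA ς₀ ς₁ ς₂) {x : Fin 4 → ℝ | 0 ≤ x 0 ∧ sp x ∈ closure S1})
    -- equal-time evolution equations on `(0,∞) × S₁`
    (heqA : ∀ ς₀ ∈ ({-1, 1} : Set ℝ), ∀ ς₁ ∈ ({-1, 1} : Set ℝ), ∀ ς₂ ∈ ({-1, 1} : Set ℝ),
      ∀ x : Fin 4 → ℝ, 0 < x 0 → sp x ∈ S1 →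
        pdC 0 (ψA ς₀ ς₁ ς₂) x - (ς₀ : ℂ) * pdC 1 (ψA ς₀ ς₁ ς₂) x
          - (ς₁ : ℂ) * pdC 2 (ψA ς₀ ς₁ ς₂) x - (ς₂ : ℂ) * pdC 3 (ψA ς₀ ς₁ ς₂) x
          + Complex.I * (ω : ℂ) * ψA ς₀ (-ς₁) ς₂ x
          + Complex.I * (ω : ℂ) * ψA ς₀ ς₁ (-ς₂) x = 0)
    -- leaky boundary condition on `C₁ = {s_e1 = s_ph < s_e2}`
    (hbc1A : ∀ ς₂ ∈ ({-1, 1} : Set ℝ), ∀ t : ℝ, 0 ≤ t → ∀ r b : ℝ, r < b →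
      ψA (-1) 1 ς₂ ![t, r, r, b]
        = Complex.exp (θ₁ * Complex.I) * ((μ |r - b| : ℝ) : ℂ) * ψA 1 (-1) ς₂ ![t, r, r, b])
    -- leaky boundary condition on `C₂ = {s_e1 < s_ph = s_e2}`
    (hbc2A : ∀ ς₁ ∈ ({-1, 1} : Set ℝ), ∀ t : ℝ, 0 ≤ t → ∀ a r : ℝ, a < r →
      ψA 1 ς₁ (-1) ![t, r, a, r]
        = Complex.exp (θ₂ * Complex.I) * ((μ |a - r| : ℝ) : ℂ) * ψA (-1) ς₁ 1 ![t, r, a, r])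
    -- compact spatial support on every bounded time interval
    (hsuppA : ∀ T : ℝ, ∃ K : Set (Fin 3 → ℝ), IsCompact K ∧
      ∀ ς₀ ∈ ({-1, 1} : Set ℝ), ∀ ς₁ ∈ ({-1, 1} : Set ℝ), ∀ ς₂ ∈ ({-1, 1} : Set ℝ),
        ∀ t ∈ Set.Icc 0 T, ∀ p : Fin 3 → ℝ, p ∉ K → ψA ς₀ ς₁ ς₂ (pt t p) = 0)
    (ψB : ℝ → ℝ → ℝ → (Fin 4 → ℝ) → ℂ)
    -- `Ψ` is C¹ on `[0,∞) × closure S₁`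
    (hregB : ∀ ς₀ ∈ ({-1, 1} : Set ℝ), ∀ ς₁ ∈ ({-1, 1} : Set ℝ), ∀ ς₂ ∈ ({-1, 1} : Set ℝ),
      ContDiffOn ℝ 1 (ψB ς₀ ς₁ ς₂) {x : Fin 4 → ℝ | 0 ≤ x 0 ∧ sp x ∈ closure S1})
    -- equal-time evolution equations on `(0,∞) × S₁`
    (heqB : ∀ ς₀ ∈ ({-1, 1} : Set ℝ), ∀ ς₁ ∈ ({-1, 1} : Set ℝ), ∀ ς₂ ∈ ({-1, 1} : Set ℝ),
      ∀ x : Fin 4 → ℝ, 0 < x 0 → sp x ∈ S1 →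
        pdC 0 (ψB ς₀ ς₁ ς₂) x - (ς₀ : ℂ) * pdC 1 (ψB ς₀ ς₁ ς₂) x
          - (ς₁ : ℂ) * pdC 2 (ψB ς₀ ς₁ ς₂) x - (ς₂ : ℂ) * pdC 3 (ψB ς₀ ς₁ ς₂) x
          + Complex.I * (ω : ℂ) * ψB ς₀ (-ς₁) ς₂ x
          + Complex.I * (ω : ℂ) * ψB ς₀ ς₁ (-ς₂) x = 0)
    -- leaky boundary condition on `C₁ = {s_e1 = s_ph < s_e2}`
    (hbc1B : ∀ ς₂ ∈ ({-1, 1} : Set ℝ), ∀ t : ℝ, 0 ≤ t → ∀ r b : ℝ, r < b →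
      ψB (-1) 1 ς₂ ![t, r, r, b]
        = Complex.exp (θ₁ * Complex.I) * ((μ |r - b| : ℝ) : ℂ) * ψB 1 (-1) ς₂ ![t, r, r, b])
    -- leaky boundary condition on `C₂ = {s_e1 < s_ph = s_e2}`
    (hbc2B : ∀ ς₁ ∈ ({-1, 1} : Set ℝ), ∀ t : ℝ, 0 ≤ t → ∀ a r : ℝ, a < r →
      ψB 1 ς₁ (-1) ![t, r, a, r]
        = Complex.exp (θ₂ * Complex.I) * ((μ |a - r| : ℝ) : ℂ) * ψB (-1) ς₁ 1 ![t, r, a, r])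
    -- compact spatial support on every bounded time interval
    (hsuppB : ∀ T : ℝ, ∃ K : Set (Fin 3 → ℝ), IsCompact K ∧
      ∀ ς₀ ∈ ({-1, 1} : Set ℝ), ∀ ς₁ ∈ ({-1, 1} : Set ℝ), ∀ ς₂ ∈ ({-1, 1} : Set ℝ),
        ∀ t ∈ Set.Icc 0 T, ∀ p : Fin 3 → ℝ, p ∉ K → ψB ς₀ ς₁ ς₂ (pt t p) = 0)
    -- same initial data on `S₁`
    (hinit : ∀ ς₀ ∈ ({-1, 1} : Set ℝ), ∀ ς₁ ∈ ({-1, 1} : Set ℝ), ∀ ς₂ ∈ ({-1, 1} : Set ℝ),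
      ∀ p ∈ S1, ψA ς₀ ς₁ ς₂ (pt 0 p) = ψB ς₀ ς₁ ς₂ (pt 0 p)) :
    ∀ ς₀ ∈ ({-1, 1} : Set ℝ), ∀ ς₁ ∈ ({-1, 1} : Set ℝ), ∀ ς₂ ∈ ({-1, 1} : Set ℝ),
      ∀ t : ℝ, 0 ≤ t → ∀ p ∈ closure S1,
        ψA ς₀ ς₁ ς₂ (pt t p) = ψB ς₀ ς₁ ς₂ (pt t p) :=
  leaky_uniqueness_general ω θ₁ θ₂ μ hμ01 ψA hregA heqA hbc1A hbc2A hsuppA ψB hregB heqB hbc1B hbc2B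
    hsuppB hinit
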